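/- arXiv:1106.6206 — 6 statements merged into one kernel-verified Lean document; each statement's English description precedes it below -/
import Mathlib

section
/- Let q ≥ 2 and m ≥ 1 be integers and let C ⊆ Q^m be a nonempty code with distance enumerator polynomial B(x). Then for every real x with 0 < x ≤ 1 and every δ with 0 ≤ δ ≤ 1, one has α_q(δ) ≥ (1/m)·log_q(|C|/B(x)) + δ·log_q x. -/
open Finset

/-- `minDistGE q n d C` : any two distinct codewords of `C ⊆ Q^n` have Hamming
distance at least `d`. -/
def minDistGE (q n d : ℕ) (C : Finset (Fin n → Fin q)) : Prop :=
  ∀ u ∈ C, ∀ v ∈ C, u ≠ v → d ≤ hammingDist u v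

/-- `Aq q n d` : maximum cardinality of a `q`-ary code of length `n` with minimum
Hamming distance at least `d`. -/
noncomputable def Aq (q n d : ℕ) : ℕ :=
  sSup {k : ℕ | ∃ C : Finset (Fin n → Fin q), minDistGE q n d C ∧ C.card = k}

/-- `alphaQ q δ = limsup_{n→∞} (1/n)·log_q A_q(n, ⌈δn⌉)`. -/
noncomputable def alphaQ (q : ℕ) (δ : ℝ) : ℝ :=
  Filter.limsup (fun n : ℕ => Real.logb q (Aq q n ⌈δ * (n : ℝ)⌉₊) / n) Filter.atTop

/-- The distance enumerator polynomial `B(x) = Σ_j B_j x^j` of a code `C ⊆ Q^m`,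
where `B_j = (1/|C|)·|{(u,v) ∈ C×C : d(u,v) = j}|`, evaluated at `x`. -/
noncomputable def distEnum (q m : ℕ) (C : Finset (Fin m → Fin q)) (x : ℝ) : ℝ :=
  (C.card : ℝ)⁻¹ * ∑ p ∈ C ×ˢ C, x ^ hammingDist p.1 p.2

/-!
Write `B_D` for the distance enumerator of a code `D`. Call two words of a code `D ⊆ Q^n` close
if they are equal or at distance `< d`. Since `x ≤ 1`, each close ordered pair contributes at least
`x ^ d` to `|D| · B_D(x)`, so the number `P` of close pairs is at most `|D| · B_D(x) / x ^ d`.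
By the Caro–Wei bound and Cauchy–Schwarz, the closeness graph has an independent set, i.e. a code
of minimum distance `d`, with at least `|D|² / P ≥ x ^ d · |D| / B_D(x)` words. The product code
`C ^ N ⊆ Q^(mN)` has `|C| ^ N` words and enumerator `B(x) ^ N`, so with `d = ⌈δmN⌉` this gives
`A_q(mN, d) ≥ x ^ d (|C| / B(x)) ^ N`; taking `log_q`, dividing by `mN` and letting `N → ∞` along
the subsequence `n = mN` bounds the limsup from below.
-/

open Filter Topology

section CaroWei

variable {β : Type*} [DecidableEq β] {r : β → β → Prop} [DecidableRel r]

theorem exists_pairwise_not_rel_sum_inv_card_le (hrefl : ∀ u, r u u)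
    (hsymm : ∀ u v, r u v → r v u) (S : Finset β) :
    ∃ T ⊆ S, (T : Set β).Pairwise (fun u v => ¬ r u v) ∧
      ∑ u ∈ S, (#{v ∈ S | r u v} : ℝ)⁻¹ ≤ #T := by
  induction S using Finset.strongInduction with
  | H S ih =>
  rcases S.eq_empty_or_nonempty with rfl | hS
  · exact ⟨∅, by simp⟩
  obtain ⟨u, hu, hmin⟩ := S.exists_min_image (fun u => #{v ∈ S | r u v}) hS
  set B := {v ∈ S | r u v}
  have huB : u ∈ B := mem_filter.mpr ⟨hu, hrefl u⟩
  obtain ⟨T, hTS, hT, hsum⟩ := ih (S \ B) (sdiff_ssubset (filter_subset _ _) ⟨u, huB⟩)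
  have huT : u ∉ T := fun h => (mem_sdiff.mp (hTS h)).2 huB
  refine ⟨insert u T, insert_subset hu (hTS.trans sdiff_subset), ?_, ?_⟩
  · rw [coe_insert]
    refine hT.insert fun v hv _ => ?_
    obtain ⟨hvS, hvB⟩ := mem_sdiff.mp (hTS hv)
    have hrv : ¬ r u v := fun h => hvB (mem_filter.mpr ⟨hvS, h⟩)
    exact ⟨hrv, fun h => hrv (hsymm _ _ h)⟩
  -- Picking `u` of minimal degree makes its closed neighbourhood `B` contribute at most `1`.
  have hBsum : ∑ v ∈ B, (#{w ∈ S | r v w} : ℝ)⁻¹ ≤ 1 := by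
    have hBpos : (0 : ℝ) < #B := by exact_mod_cast card_pos.mpr ⟨u, huB⟩
    calc ∑ v ∈ B, (#{w ∈ S | r v w} : ℝ)⁻¹ ≤ ∑ _v ∈ B, (#B : ℝ)⁻¹ :=
          sum_le_sum fun v hv => inv_anti₀ hBpos (by exact_mod_cast hmin v (filter_subset _ _ hv))
      _ = 1 := by rw [sum_const, nsmul_eq_mul, mul_inv_cancel₀ hBpos.ne']
  have hrest : ∑ v ∈ S \ B, (#{w ∈ S | r v w} : ℝ)⁻¹
      ≤ ∑ v ∈ S \ B, (#{w ∈ S \ B | r v w} : ℝ)⁻¹ := by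
    refine sum_le_sum fun v hv => inv_anti₀ ?_ ?_
    · exact_mod_cast card_pos.mpr ⟨v, mem_filter.mpr ⟨hv, hrefl v⟩⟩
    · exact_mod_cast card_le_card (filter_subset_filter _ sdiff_subset)
  rw [← sum_sdiff (show B ⊆ S from filter_subset _ _), card_insert_of_notMem huT, Nat.cast_succ]
  linarith

theorem exists_pairwise_not_rel_card_sq_le (hrefl : ∀ u, r u u)
    (hsymm : ∀ u v, r u v → r v u) (S : Finset β) :
    ∃ T ⊆ S, (T : Set β).Pairwise (fun u v => ¬ r u v) ∧
      (#S : ℝ) ^ 2 ≤ #T * ∑ u ∈ S, (#{v ∈ S | r u v} : ℝ) := by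
  obtain ⟨T, hTS, hT, hsum⟩ := exists_pairwise_not_rel_sum_inv_card_le hrefl hsymm S
  refine ⟨T, hTS, hT, ?_⟩
  have hdeg : ∀ u ∈ S, (0 : ℝ) < #{v ∈ S | r u v} := fun u hu => by
    exact_mod_cast card_pos.mpr ⟨u, mem_filter.mpr ⟨hu, hrefl u⟩⟩
  rcases S.eq_empty_or_nonempty with rfl | hS
  · simp
  have titu := sq_sum_div_le_sum_sq_div S (fun _ => (1 : ℝ)) hdeg
  simp only [sum_const, nsmul_eq_mul, mul_one, one_pow, one_div] at titu
  calc (#S : ℝ) ^ 2 ≤ (∑ u ∈ S, (#{v ∈ S | r u v} : ℝ)⁻¹) * ∑ u ∈ S, (#{v ∈ S | r u v} : ℝ) :=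
        (div_le_iff₀ (sum_pos hdeg hS)).mp titu
    _ ≤ #T * ∑ u ∈ S, (#{v ∈ S | r u v} : ℝ) := by gcongr

end CaroWei

theorem le_limsup_of_tendsto_of_le_comp {ι κ α : Type*} [ConditionallyCompleteLinearOrder α]
    [TopologicalSpace α] [OrderTopology α] [DenselyOrdered α] {f : Filter ι} {g : Filter κ}
    [g.NeBot] {u : ι → α} {v : κ → α} {φ : κ → ι} {a : α} (hφ : Tendsto φ g f)
    (hv : Tendsto v g (𝓝 a)) (hvu : ∀ᶠ k in g, v k ≤ u (φ k))
    (hu : IsBoundedUnder (· ≤ ·) f u) : a ≤ limsup u f := by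
  refine le_of_forall_lt_imp_le_of_dense fun b hb => le_limsup_of_frequently_le ?_ hu
  refine hφ.frequently (Eventually.frequently ?_)
  filter_upwards [hv.eventually (lt_mem_nhds hb), hvu] with k hbv hvu
  exact hbv.le.trans hvu

section ProductCode

theorem hammingDist_comp_equiv {ι κ β : Type*} [Fintype ι] [Fintype κ] [DecidableEq β]
    (e : ι ≃ κ) (f g : κ → β) : hammingDist (f ∘ e) (g ∘ e) = hammingDist f g := by
  simp only [hammingDist]
  exact card_equiv e (by simp)

theorem hammingDist_uncurry {ι κ β : Type*} [Fintype ι] [Fintype κ] [DecidableEq β]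
    (f g : κ → ι → β) :
    hammingDist (Function.uncurry f) (Function.uncurry g) = ∑ k, hammingDist (f k) (g k) := by
  simp only [hammingDist, card_filter, Fintype.sum_prod_type, Function.uncurry_apply_pair]
  rfl

theorem sum_piFinset_sum_piFinset_prod {ι α R : Type*} [Fintype ι] [DecidableEq ι]
    [CommSemiring R] (C : Finset α) (f : α → α → R) :
    ∑ u ∈ Fintype.piFinset (fun _ : ι => C), ∑ v ∈ Fintype.piFinset (fun _ : ι => C),
      ∏ i, f (u i) (v i) = (∑ a ∈ C, ∑ b ∈ C, f a b) ^ Fintype.card ι := by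
  calc ∑ u ∈ Fintype.piFinset (fun _ : ι => C), ∑ v ∈ Fintype.piFinset (fun _ : ι => C),
        ∏ i, f (u i) (v i)
      = ∑ u ∈ Fintype.piFinset (fun _ : ι => C), ∏ i, ∑ b ∈ C, f (u i) b :=
        sum_congr rfl fun u _ => (prod_univ_sum (fun _ => C) fun i b => f (u i) b).symm
    _ = ∏ _i : ι, ∑ a ∈ C, ∑ b ∈ C, f a b :=
        (prod_univ_sum (fun _ => C) fun _ a => ∑ b ∈ C, f a b).symm
    _ = _ := by rw [prod_const, card_univ]

def flattenEquiv (q m N : ℕ) : (Fin N → Fin m → Fin q) ≃ (Fin (m * N) → Fin q) :=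
  (Equiv.curry _ _ _).symm.trans
    (Equiv.arrowCongr ((Equiv.prodComm _ _).trans finProdFinEquiv) (Equiv.refl _))

theorem hammingDist_flattenEquiv (q m N : ℕ) (u v : Fin N → Fin m → Fin q) :
    hammingDist (flattenEquiv q m N u) (flattenEquiv q m N v) = ∑ j, hammingDist (u j) (v j) := by
  rw [← hammingDist_uncurry]
  exact hammingDist_comp_equiv ((Equiv.prodComm _ _).trans finProdFinEquiv).symm
    (Function.uncurry u) (Function.uncurry v)

def productCode {q m : ℕ} (C : Finset (Fin m → Fin q)) (N : ℕ) : Finset (Fin (m * N) → Fin q) :=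
  (Fintype.piFinset fun _ : Fin N => C).map (flattenEquiv q m N).toEmbedding

variable {q m : ℕ} (C : Finset (Fin m → Fin q)) (N : ℕ)

theorem card_productCode : #(productCode C N) = #C ^ N := by
  simp [productCode]

theorem distEnum_productCode (x : ℝ) :
    distEnum q (m * N) (productCode C N) x = distEnum q m C x ^ N := by
  have hsum : ∑ p ∈ productCode C N ×ˢ productCode C N, x ^ hammingDist p.1 p.2
      = (∑ p ∈ C ×ˢ C, x ^ hammingDist p.1 p.2) ^ N := by
    simp_rw [sum_product, productCode, sum_map, Equiv.coe_toEmbedding, hammingDist_flattenEquiv,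
      ← prod_pow_eq_pow_sum]
    simpa using sum_piFinset_sum_piFinset_prod (ι := Fin N) C (fun a b => x ^ hammingDist a b)
  rw [distEnum, distEnum, hsum, card_productCode, Nat.cast_pow, mul_pow, inv_pow]

end ProductCode

section Codes

variable {q n : ℕ}

theorem exists_minDistGE_card_sq_mul_pow_le (D : Finset (Fin n → Fin q)) (d : ℕ) {x : ℝ}
    (hx0 : 0 ≤ x) (hx1 : x ≤ 1) :
    ∃ T : Finset (Fin n → Fin q), minDistGE q n d T ∧
      (#D : ℝ) ^ 2 * x ^ d ≤ #T * ∑ p ∈ D ×ˢ D, x ^ hammingDist p.1 p.2 := by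
  -- `u = v` keeps closeness reflexive when `d = 0`.
  obtain ⟨T, -, hT, hcard⟩ := exists_pairwise_not_rel_card_sq_le
    (r := fun u v => hammingDist u v < d ∨ u = v) (fun u => Or.inr rfl)
    (fun u v h => h.imp (fun h' => by rwa [hammingDist_comm]) Eq.symm) D
  refine ⟨T, fun u hu v hv huv => ?_, ?_⟩
  · exact not_lt.mp (not_or.mp (hT hu hv huv)).1
  have hclose : (∑ u ∈ D, (#{v ∈ D | hammingDist u v < d ∨ u = v} : ℝ)) * x ^ d
      ≤ ∑ p ∈ D ×ˢ D, x ^ hammingDist p.1 p.2 := by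
    simp only [card_filter, Nat.cast_sum, Nat.cast_ite, Nat.cast_one, Nat.cast_zero, sum_mul,
      sum_product]
    refine sum_le_sum fun u _ => sum_le_sum fun v _ => ?_
    split_ifs with h
    · rw [one_mul]
      refine pow_le_pow_of_le_one hx0 hx1 ?_
      rcases h with h | rfl
      · exact h.le
      · simp
    · rw [zero_mul]
      positivity
  calc (#D : ℝ) ^ 2 * x ^ d
      ≤ #T * (∑ u ∈ D, (#{v ∈ D | hammingDist u v < d ∨ u = v} : ℝ)) * x ^ d := by gcongr
    _ ≤ #T * ∑ p ∈ D ×ˢ D, x ^ hammingDist p.1 p.2 := by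
      rw [mul_assoc]
      gcongr

theorem card_le_Aq {d : ℕ} (T : Finset (Fin n → Fin q)) (hT : minDistGE q n d T) :
    #T ≤ Aq q n d := by
  refine le_csSup ⟨q ^ n, ?_⟩ ⟨T, hT, rfl⟩
  rintro _ ⟨T', -, rfl⟩
  simpa using card_le_univ T'

theorem pow_mul_card_div_distEnum_le_Aq (D : Finset (Fin n → Fin q)) (d : ℕ) {x : ℝ}
    (hx0 : 0 ≤ x) (hx1 : x ≤ 1) :
    x ^ d * (#D / distEnum q n D x) ≤ Aq q n d := by
  obtain ⟨T, hT, hcard⟩ := exists_minDistGE_card_sq_mul_pow_le D d hx0 hx1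
  have hdiv : x ^ d * (#D / distEnum q n D x)
      = (#D : ℝ) ^ 2 * x ^ d / ∑ p ∈ D ×ˢ D, x ^ hammingDist p.1 p.2 := by
    rw [distEnum, div_mul_eq_div_div, div_inv_eq_mul]
    ring
  rw [hdiv]
  have hTA : (#T : ℝ) ≤ Aq q n d := by exact_mod_cast card_le_Aq T hT
  exact (div_le_of_le_mul₀ (sum_nonneg fun _ _ => by positivity) (Nat.cast_nonneg _) hcard).trans
    hTA

theorem distEnum_pos {D : Finset (Fin n → Fin q)} (hD : D.Nonempty) {x : ℝ} (hx : 0 < x) :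
    0 < distEnum q n D x :=
  mul_pos (inv_pos.mpr (by exact_mod_cast hD.card_pos))
    (sum_pos (fun _ _ => pow_pos hx _) (hD.product hD))

theorem Aq_le_pow (d : ℕ) : Aq q n d ≤ q ^ n := by
  refine csSup_le' ?_
  rintro _ ⟨T, -, rfl⟩
  simpa using card_le_univ T

theorem logb_Aq_div_le_one (hq : 2 ≤ q) (d : ℕ) :
    Real.logb q (Aq q n d) / n ≤ 1 := by
  have hq1 : (1 : ℝ) < q := by exact_mod_cast hq
  refine div_le_one_of_le₀ ?_ n.cast_nonneg
  rcases (Aq q n d).eq_zero_or_pos with h | h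
  · simp [h]
  calc Real.logb q (Aq q n d) ≤ Real.logb q ((q : ℝ) ^ n) :=
        Real.logb_le_logb_of_le hq1 (by exact_mod_cast h) (by exact_mod_cast Aq_le_pow d)
    _ = n := by rw [Real.logb_pow, Real.logb_self_eq_one hq1, mul_one]

end Codes

theorem le_logb_Aq_div {q m : ℕ} (hq : 2 ≤ q) (hm : 0 < m) {C : Finset (Fin m → Fin q)}
    (hC : C.Nonempty) {x : ℝ} (hx0 : 0 < x) (hx1 : x ≤ 1) {δ : ℝ} (hδ0 : 0 ≤ δ) {N : ℕ}
    (hN : 0 < N) :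
    1 / (m : ℝ) * Real.logb q (#C / distEnum q m C x) + δ * Real.logb q x
        + Real.logb q x / m / N
      ≤ Real.logb q (Aq q (m * N) ⌈δ * (m * N : ℕ)⌉₊) / (m * N : ℕ) := by
  have hq1 : (1 : ℝ) < q := by exact_mod_cast hq
  set R := (#C : ℝ) / distEnum q m C x
  have hR : 0 < R := div_pos (by exact_mod_cast hC.card_pos) (distEnum_pos hC hx0)
  set d := ⌈δ * (m * N : ℕ)⌉₊
  have hAq : x ^ d * R ^ N ≤ Aq q (m * N) d := by
    have := pow_mul_card_div_distEnum_le_Aq (productCode C N) d hx0.le hx1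
    rwa [distEnum_productCode, card_productCode, Nat.cast_pow, ← div_pow] at this
  have hlog : d * Real.logb q x + N * Real.logb q R ≤ Real.logb q (Aq q (m * N) d) := by
    rw [← Real.logb_pow, ← Real.logb_pow, ← Real.logb_mul (by positivity) (by positivity)]
    exact Real.logb_le_logb_of_le hq1 (by positivity) hAq
  have hd : (δ * (m * N : ℕ) + 1) * Real.logb q x ≤ d * Real.logb q x :=
    mul_le_mul_of_nonpos_right (Nat.ceil_lt_add_one (by positivity)).le
      (Real.logb_nonpos hq1 hx0.le hx1)
  have hmN : (0 : ℝ) < (m * N : ℕ) := by positivity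
  have hexp : (1 / (m : ℝ) * Real.logb q R + δ * Real.logb q x + Real.logb q x / m / N)
      * (m * N : ℕ) = N * Real.logb q R + (δ * (m * N : ℕ) + 1) * Real.logb q x := by
    push_cast
    field_simp
    ring
  rw [le_div_iff₀ hmN, hexp]
  linarith

theorem generalized_GV_asymptotic_general (q m : ℕ) (hq : 2 ≤ q) (hm : 1 ≤ m)
    (C : Finset (Fin m → Fin q)) (hC : C.Nonempty)
    (x : ℝ) (hx0 : 0 < x) (hx1 : x ≤ 1) (δ : ℝ) (hδ0 : 0 ≤ δ) :
    (1 / (m : ℝ)) * Real.logb q ((C.card : ℝ) / distEnum q m C x) + δ * Real.logb q x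
      ≤ alphaQ q δ := by
  refine le_limsup_of_tendsto_of_le_comp (g := atTop) (φ := fun N => m * N)
    (v := fun N : ℕ => 1 / (m : ℝ) * Real.logb q (#C / distEnum q m C x) + δ * Real.logb q x
      + Real.logb q x / m / N) ?_ ?_ ?_ ?_
  · exact tendsto_id.const_mul_atTop' hm
  · simpa using tendsto_const_nhds.add (tendsto_const_div_atTop_nhds_zero_nat (Real.logb q x / m))
  · filter_upwards [eventually_gt_atTop 0] with N hN
    exact le_logb_Aq_div hq hm hC hx0 hx1 hδ0 hN
  · exact isBoundedUnder_of ⟨1, fun _ => logb_Aq_div_le_one hq _⟩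

theorem generalized_GV_asymptotic (q m : ℕ) (hq : 2 ≤ q) (hm : 1 ≤ m)
    (C : Finset (Fin m → Fin q)) (hC : C.Nonempty)
    (x : ℝ) (hx0 : 0 < x) (hx1 : x ≤ 1) (δ : ℝ) (hδ0 : 0 ≤ δ) (hδ1 : δ ≤ 1) :
    (1 / (m : ℝ)) * Real.logb q ((C.card : ℝ) / distEnum q m C x) + δ * Real.logb q x
      ≤ alphaQ q δ :=
  generalized_GV_asymptotic_general q m hq hm C hC x hx0 hx1 δ hδ0
end

section
/- Every finite simple graph without loops with v vertices and e edges contains a clique of size at least v² / (v² − 2e). -/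
/-! A maximum clique `s` makes `G` free of `(#s + 1)`-cliques, so Turán's theorem bounds the
edge count by that of the Turán graph, `2e ≤ (1 - 1/#s) v²`, which rearranges to
`v² / (v² - 2e) ≤ #s`. -/

open Finset

namespace SimpleGraph

variable {V : Type*} {G : SimpleGraph V}

lemma IsMaximumClique.cliqueFree_card_add_one [Finite V] {s : Finset V}
    (hs : G.IsMaximumClique s) : G.CliqueFree (#s + 1) := fun t ht ↦ by
  have := hs.maximum t ht.isClique
  rw [ht.card_eq] at this
  omega

variable [Fintype V] [DecidableRel G.Adj]

-- Turán's bound `2re ≤ (r - 1)v²`, stated without truncated subtraction so that it holds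
-- for `r = 0`.
theorem CliqueFree.two_mul_mul_card_edgeFinset_add_sq_le {r : ℕ} (cf : G.CliqueFree (r + 1)) :
    2 * r * #G.edgeFinset + Fintype.card V ^ 2 ≤ r * Fintype.card V ^ 2 := by
  rcases r.eq_zero_or_pos with rfl | hr
  · rw [cliqueFree_one, ← Fintype.card_eq_zero_iff] at cf
    simp [cf]
  obtain ⟨H, _, maxH⟩ := exists_isTuranMaximal (V := V) hr
  obtain ⟨φ⟩ := maxH.nonempty_iso_turanGraph
  have hGH : #G.edgeFinset ≤ #(turanGraph (Fintype.card V) r).edgeFinset :=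
    φ.card_edgeFinset_eq ▸ maxH.2 cf
  have hturan := mul_card_edgeFinset_turanGraph_le (n := Fintype.card V) (r := r)
  calc 2 * r * #G.edgeFinset + Fintype.card V ^ 2
      ≤ (r - 1) * Fintype.card V ^ 2 + Fintype.card V ^ 2 := by grw [hGH, hturan]
    _ = r * Fintype.card V ^ 2 := by rw [← Nat.add_one_mul, Nat.sub_add_cancel hr]

theorem CliqueFree.sq_div_sq_sub_two_mul_card_edgeFinset_le {r : ℕ} (cf : G.CliqueFree (r + 1)) :
    (Fintype.card V : ℝ) ^ 2 / ((Fintype.card V : ℝ) ^ 2 - 2 * #G.edgeFinset) ≤ r := by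
  have key : (2 * r * #G.edgeFinset + Fintype.card V ^ 2 : ℝ) ≤ r * Fintype.card V ^ 2 := by
    exact_mod_cast cf.two_mul_mul_card_edgeFinset_add_sq_le
  rcases le_or_gt ((Fintype.card V : ℝ) ^ 2 - 2 * #G.edgeFinset) 0 with hd | hd
  · exact (div_nonpos_of_nonneg_of_nonpos (by positivity) hd).trans r.cast_nonneg
  · rw [div_le_iff₀ hd]
    linarith

end SimpleGraph

theorem turan_clique_bound_general {V : Type*} [Fintype V]
    (G : SimpleGraph V) [DecidableRel G.Adj] :
    ∃ t : Finset V, G.IsClique (t : Set V) ∧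
      (Fintype.card V : ℝ) ^ 2 / ((Fintype.card V : ℝ) ^ 2 - 2 * (G.edgeFinset.card : ℝ))
        ≤ (t.card : ℝ) := by
  obtain ⟨s, hs⟩ := G.maximumClique_exists
  exact ⟨s, hs.isClique, hs.cliqueFree_card_add_one.sq_div_sq_sub_two_mul_card_edgeFinset_le⟩

/-- Turán's theorem (clique form): a finite simple graph without loops with `v` vertices
and `e` edges contains a clique of size at least `v² / (v² − 2e)`. -/
theorem turan_clique_bound {V : Type*} [Fintype V] [DecidableEq V]
    (G : SimpleGraph V) [DecidableRel G.Adj] :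
    ∃ t : Finset V, G.IsClique (t : Set V) ∧
      (Fintype.card V : ℝ) ^ 2 / ((Fintype.card V : ℝ) ^ 2 - 2 * (G.edgeFinset.card : ℝ))
        ≤ (t.card : ℝ) :=
  turan_clique_bound_general G
end

section
/- Let G = (V,E) be a finite simple graph without loops and for each vertex v let d_v denote its degree. Then G contains a clique of size at least Σ_{v∈V} 1/(|V| − d_v). -/
/-!
Since `|V| − d_v` counts the non-neighbours of `v`, `v` itself included, the bound is proved for
every vertex set `s` with non-neighbours counted inside `s`. Pick `v ∈ s` with the fewest
non-neighbours and recurse into its neighbourhood: a clique there extends by `v`. Each of the `k`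
non-neighbours of `v` has at least `k` non-neighbours, so together they contribute at most `1`,
and passing to the neighbourhood can only shrink the counts of the remaining vertices.
-/

open Finset

theorem Finset.sum_one_div_le_one_of_card_le {ι : Type*} {A : Finset ι} {f : ι → ℕ}
    (h : ∀ i ∈ A, #A ≤ f i) : ∑ i ∈ A, (1 : ℝ) / f i ≤ 1 := by
  calc ∑ i ∈ A, (1 : ℝ) / f i
      ≤ ∑ _i ∈ A, (1 : ℝ) / #A := sum_le_sum fun i hi => one_div_le_one_div_of_le
        (by exact_mod_cast card_pos.2 ⟨i, hi⟩) (by exact_mod_cast h i hi)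
    _ = #A / #A := by rw [sum_const, nsmul_eq_mul, mul_one_div]
    _ ≤ 1 := div_self_le_one _

namespace SimpleGraph

variable {V : Type*} (G : SimpleGraph V) [DecidableRel G.Adj]

theorem one_div_card_filter_not_adj_le_of_subset {s t : Finset V} (hst : s ⊆ t) {v : V}
    (hv : v ∈ s) :
    (1 : ℝ) / #{u ∈ t | ¬G.Adj v u} ≤ 1 / #{u ∈ s | ¬G.Adj v u} :=
  one_div_le_one_div_of_le (by exact_mod_cast card_pos.2 ⟨v, mem_filter.2 ⟨hv, G.irrefl⟩⟩)
    (by exact_mod_cast card_le_card (filter_subset_filter _ hst))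

theorem exists_isClique_subset_sum_one_div_card_filter_not_adj_le [DecidableEq V]
    (s : Finset V) :
    ∃ t ⊆ s, G.IsClique (t : Set V) ∧
      ∑ v ∈ s, (1 : ℝ) / #{u ∈ s | ¬G.Adj v u} ≤ #t := by
  induction s using Finset.strongInduction with
  | H s ih =>
  obtain rfl | hs := s.eq_empty_or_nonempty
  · exact ⟨∅, subset_rfl, by simp, by simp⟩
  obtain ⟨v, hv, hmin⟩ := s.exists_min_image (fun w => #{u ∈ s | ¬G.Adj w u}) hs
  set N := {u ∈ s | G.Adj v u}
  obtain ⟨t, htN, ht, hsum⟩ := ih N (filter_ssubset.2 ⟨v, hv, G.irrefl⟩)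
  have hadj : ∀ u ∈ t, G.Adj v u := fun u hu => (mem_filter.1 (htN hu)).2
  refine ⟨insert v t, insert_subset hv (htN.trans (filter_subset _ _)), ?_, ?_⟩
  · rw [coe_insert]
    exact ht.insert fun u hu _ => hadj u hu
  have hneighbours : ∑ u ∈ N, (1 : ℝ) / #{w ∈ s | ¬G.Adj u w} ≤ #t :=
    (sum_le_sum fun u hu =>
      G.one_div_card_filter_not_adj_le_of_subset (filter_subset _ s) hu).trans hsum
  have hnon_neighbours : ∑ u ∈ s with ¬G.Adj v u, (1 : ℝ) / #{w ∈ s | ¬G.Adj u w} ≤ 1 :=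
    sum_one_div_le_one_of_card_le fun u hu => hmin u (mem_filter.1 hu).1
  rw [card_insert_of_notMem fun hvt => G.irrefl (hadj v hvt),
    ← sum_filter_add_sum_filter_not s (G.Adj v)]
  push_cast
  exact add_le_add hneighbours hnon_neighbours

theorem card_filter_not_adj_univ [Fintype V] (v : V) :
    #{u | ¬G.Adj v u} = Fintype.card V - G.degree v := by
  rw [← card_univ, ← card_filter_add_card_filter_not (s := univ) (G.Adj v),
    ← neighborFinset_eq_filter, card_neighborFinset_eq_degree, Nat.add_sub_cancel_left]

end SimpleGraph

theorem caro_wei_clique_bound_general {V : Type*} [Fintype V]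
    (G : SimpleGraph V) [DecidableRel G.Adj] :
    ∃ t : Finset V, G.IsClique (t : Set V) ∧
      ∑ v : V, (1 : ℝ) / ((Fintype.card V : ℝ) - (G.degree v : ℝ)) ≤ (t.card : ℝ) := by
  classical
  obtain ⟨t, -, ht, hsum⟩ := G.exists_isClique_subset_sum_one_div_card_filter_not_adj_le univ
  refine ⟨t, ht, le_of_eq_of_le (sum_congr rfl fun v _ => ?_) hsum⟩
  rw [G.card_filter_not_adj_univ, Nat.cast_sub (G.degree_lt_card_verts v).le]

/-- Caro–Wei theorem: a finite simple graph without loops contains a clique of size at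
least `Σ_{v∈V} 1/(|V| − d_v)`, where `d_v` is the degree of vertex `v`. -/
theorem caro_wei_clique_bound {V : Type*} [Fintype V] [DecidableEq V]
    (G : SimpleGraph V) [DecidableRel G.Adj] :
    ∃ t : Finset V, G.IsClique (t : Set V) ∧
      ∑ v : V, (1 : ℝ) / ((Fintype.card V : ℝ) - (G.degree v : ℝ)) ≤ (t.card : ℝ) :=
  caro_wei_clique_bound_general G
end

section
/- Let q ≥ 2 and m ≥ 1 be integers and let C ⊆ Q^m be a nonempty code with distance enumerator polynomial B(x). Then for every δ ∈ (0, 1 − 1/q) and every x ∈ (0,1], one has (1/m)·log_q(|C|/B(x)) + δ·log_q x ≤ 1 − h_q(δ); that is, the largest lower bound obtainable from the generalized Gilbert–Varshamov bound is the asymptotic Gilbert–Varshamov bound 1 − h_q(δ). -/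
/-!
Expanding `x ^ d(u, v) = ∏ i, (x + (1 - x) [u i = v i])` over subsets writes `|C| B(x)` as a
combination, with nonnegative weights `(1 - x) ^ |S| x ^ (m - |S|)`, of the numbers of pairs of
codewords agreeing on a coordinate set `S`. By Cauchy–Schwarz over the `q ^ |S|` possible
restrictions to `S`, there are at least `|C|² / q ^ |S|` such pairs, so
`B(x) ≥ |C| ((1 + (q - 1) x) / q) ^ m`, that is,
`(1/m) log_q (|C| / B(x)) ≤ 1 - log_q (1 + (q - 1) x)`.
Concavity of `log` at the points `(q - 1) x / δ` and `1 / (1 - δ)` with weights `δ` and `1 - δ`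
gives `h_q(δ) + δ log_q x ≤ log_q (1 + (q - 1) x)`.
-/

open Finset

/-- The `q`-ary entropy function `h_q(x)`. -/
noncomputable def entq (q : ℕ) (x : ℝ) : ℝ :=
  -x * Real.logb q x - (1 - x) * Real.logb q (1 - x) + x * Real.logb q ((q : ℝ) - 1)

theorem card_sq_le_card_mul_card_filter_eq {γ β : Type*} [Fintype β] [DecidableEq β]
    (s : Finset γ) (f : γ → β) :
    #s ^ 2 ≤ Fintype.card β * #{p ∈ s ×ˢ s | f p.1 = f p.2} := by
  have hs : #s = ∑ b, #{a ∈ s | f a = b} := card_eq_sum_card_fiberwise fun _ _ ↦ mem_univ _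
  have hcoll : #{p ∈ s ×ˢ s | f p.1 = f p.2} = ∑ b, #{a ∈ s | f a = b} ^ 2 := by
    rw [card_eq_sum_card_fiberwise (f := fun p ↦ f p.1) (t := univ) fun _ _ ↦ mem_univ _]
    refine sum_congr rfl fun b _ ↦ ?_
    rw [sq, ← card_product]
    congr 1
    ext ⟨u, v⟩
    simp only [mem_filter, mem_product]
    constructor
    · rintro ⟨⟨⟨hu, hv⟩, huv⟩, rfl⟩; exact ⟨⟨hu, rfl⟩, hv, huv.symm⟩
    · rintro ⟨⟨hu, rfl⟩, hv, hvb⟩; exact ⟨⟨⟨hu, hv⟩, hvb.symm⟩, rfl⟩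
  rw [hs, hcoll]
  exact sq_sum_le_card_mul_sum_sq

section HammingExpansion

variable {ι α : Type*} [Fintype ι] [DecidableEq ι] [DecidableEq α]

theorem card_sq_le_pow_mul_card_filter_eqOn [Fintype α] (C : Finset (ι → α)) (S : Finset ι) :
    #C ^ 2 ≤ Fintype.card α ^ #S * #{p ∈ C ×ˢ C | ∀ i ∈ S, p.1 i = p.2 i} := by
  have h := card_sq_le_card_mul_card_filter_eq C S.restrict
  simpa only [Fintype.card_fun, Fintype.card_coe, funext_iff, Finset.restrict, Subtype.forall]
    using h

theorem pow_hammingDist_eq_sum_powerset {R : Type*} [CommRing R] (x : R) (u v : ι → α) :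
    x ^ hammingDist u v =
      ∑ S ∈ univ.powerset,
        (1 - x) ^ #S * x ^ #Sᶜ * if ∀ i ∈ S, u i = v i then 1 else 0 := by
  have hprod : x ^ hammingDist u v = ∏ i, ((1 - x) * (if u i = v i then 1 else 0) + x) := by
    rw [prod_congr rfl fun i _ ↦ show _ = if u i = v i then 1 else x by split_ifs <;> ring,
      prod_ite, prod_const_one, one_mul, prod_const]
    rfl
  rw [hprod, prod_add]
  refine sum_congr rfl fun S _ ↦ ?_
  rw [prod_mul_distrib, prod_const, prod_boole, prod_const, compl_eq_univ_sdiff]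
  -- `congr` identifies the two `Decidable` instances of the `if`, which differ syntactically
  rw [mul_right_comm]
  congr

theorem sum_pow_hammingDist_eq_sum_powerset {R : Type*} [CommRing R] (C : Finset (ι → α))
    (x : R) :
    ∑ p ∈ C ×ˢ C, x ^ hammingDist p.1 p.2 =
      ∑ S ∈ univ.powerset,
        (1 - x) ^ #S * x ^ #Sᶜ * #{p ∈ C ×ˢ C | ∀ i ∈ S, p.1 i = p.2 i} := by
  simp_rw [pow_hammingDist_eq_sum_powerset, ← sum_boole, mul_sum]
  exact sum_comm

theorem card_sq_mul_le_sum_pow_hammingDist [Fintype α] [Nonempty α] (C : Finset (ι → α))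
    {x : ℝ} (hx0 : 0 ≤ x) (hx1 : x ≤ 1) :
    (#C : ℝ) ^ 2 * ((1 + (Fintype.card α - 1) * x) / Fintype.card α) ^ Fintype.card ι ≤
      ∑ p ∈ C ×ˢ C, x ^ hammingDist p.1 p.2 := by
  set q : ℝ := (Fintype.card α : ℝ)
  have hq : 0 < q := by positivity
  have hpow : ((1 + (q - 1) * x) / q) ^ Fintype.card ι =
      ∑ S ∈ (univ : Finset ι).powerset, ((1 - x) / q) ^ #S * x ^ #Sᶜ := by
    rw [show (1 + (q - 1) * x) / q = (1 - x) / q + x by field_simp; ring, ← card_univ,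
      ← prod_const, prod_add]
    simp only [prod_const, compl_eq_univ_sdiff]
  rw [sum_pow_hammingDist_eq_sum_powerset, hpow, mul_sum]
  refine sum_le_sum fun S _ ↦ ?_
  have hS : (#C : ℝ) ^ 2 ≤
      (Fintype.card α : ℝ) ^ #S * #{p ∈ C ×ˢ C | ∀ i ∈ S, p.1 i = p.2 i} := by
    exact_mod_cast card_sq_le_pow_mul_card_filter_eqOn C S
  have h1x : 0 ≤ 1 - x := by linarith
  calc (#C : ℝ) ^ 2 * (((1 - x) / q) ^ #S * x ^ #Sᶜ)
      = (1 - x) ^ #S * x ^ #Sᶜ * ((#C : ℝ) ^ 2 / q ^ #S) := by rw [div_pow]; ring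
    _ ≤ (1 - x) ^ #S * x ^ #Sᶜ * #{p ∈ C ×ˢ C | ∀ i ∈ S, p.1 i = p.2 i} := by
      gcongr
      rwa [div_le_iff₀' (by positivity)]

end HammingExpansion

theorem card_mul_pow_le_distEnum {q m : ℕ} (hq : 0 < q) (C : Finset (Fin m → Fin q)) {x : ℝ}
    (hx0 : 0 ≤ x) (hx1 : x ≤ 1) :
    #C * ((1 + (q - 1) * x) / q) ^ m ≤ distEnum q m C x := by
  have : Nonempty (Fin q) := Fin.pos_iff_nonempty.mp hq
  have h := card_sq_mul_le_sum_pow_hammingDist C hx0 hx1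
  rw [Fintype.card_fin, Fintype.card_fin] at h
  rcases eq_or_ne (#C : ℝ) 0 with hC | hC
  · simp [distEnum, hC]
  · calc (#C : ℝ) * ((1 + (q - 1) * x) / q) ^ m
        = (#C : ℝ)⁻¹ * ((#C : ℝ) ^ 2 * ((1 + (q - 1) * x) / q) ^ m) := by field_simp
      _ ≤ distEnum q m C x := by unfold distEnum; gcongr

theorem logb_card_div_distEnum_le {q m : ℕ} (hq : 2 ≤ q) (hm : 1 ≤ m)
    {C : Finset (Fin m → Fin q)} (hC : C.Nonempty) {x : ℝ} (hx0 : 0 < x) (hx1 : x ≤ 1) :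
    1 / (m : ℝ) * Real.logb q (#C / distEnum q m C x) ≤ 1 - Real.logb q (1 + (q - 1) * x) := by
  have hq1 : (1 : ℝ) < q := by exact_mod_cast hq
  set z : ℝ := 1 + (q - 1) * x
  have hz : 0 < z := by positivity
  have hB := card_mul_pow_le_distEnum (by omega) C hx0.le hx1
  have hC : (0 : ℝ) < #C := by exact_mod_cast hC.card_pos
  have hBpos : 0 < distEnum q m C x := lt_of_lt_of_le (by positivity) hB
  have hratio : #C / distEnum q m C x ≤ (q / z) ^ m := by
    rw [div_le_iff₀ hBpos]
    calc (#C : ℝ) = (q / z) ^ m * (#C * (z / q) ^ m) := by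
          rw [mul_left_comm, ← mul_pow, div_mul_div_cancel₀ hz.ne', div_self (by positivity),
            one_pow, mul_one]
      _ ≤ (q / z) ^ m * distEnum q m C x := by gcongr
  have hlog : Real.logb q (#C / distEnum q m C x) ≤ m * (1 - Real.logb q z) := by
    calc _ ≤ Real.logb q ((q / z) ^ m) := Real.logb_le_logb_of_le hq1 (by positivity) hratio
      _ = m * (1 - Real.logb q z) := by
        rw [Real.logb_pow, Real.logb_div (by positivity) hz.ne', Real.logb_self_eq_one hq1]
  have hm : (0 : ℝ) < m := by exact_mod_cast hm
  calc _ ≤ 1 / (m : ℝ) * (m * (1 - Real.logb q z)) := by gcongr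
    _ = 1 - Real.logb q z := by field_simp

theorem mul_log_div_add_mul_log_div_le_log_add {t a b : ℝ} (ht0 : 0 < t) (ht1 : t < 1)
    (ha : 0 < a) (hb : 0 < b) :
    t * Real.log (a / t) + (1 - t) * Real.log (b / (1 - t)) ≤ Real.log (a + b) := by
  have h1t : 0 < 1 - t := by linarith
  have h := strictConcaveOn_log_Ioi.concaveOn.2 (Set.mem_Ioi.2 (div_pos ha ht0))
    (Set.mem_Ioi.2 (div_pos hb h1t)) ht0.le h1t.le (by ring)
  rwa [smul_eq_mul, smul_eq_mul, smul_eq_mul, smul_eq_mul, mul_div_cancel₀ _ ht0.ne',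
    mul_div_cancel₀ _ h1t.ne'] at h

theorem entq_add_mul_logb_le {q : ℕ} (hq : 2 ≤ q) {δ x : ℝ} (hδ0 : 0 < δ) (hδ1 : δ < 1)
    (hx : 0 < x) :
    entq q δ + δ * Real.logb q x ≤ Real.logb q (1 + (q - 1) * x) := by
  have hq1 : (1 : ℝ) < q := by exact_mod_cast hq
  have h1δ : 0 < 1 - δ := by linarith
  have h := mul_log_div_add_mul_log_div_le_log_add hδ0 hδ1
    (mul_pos (sub_pos.2 hq1) hx) one_pos
  calc entq q δ + δ * Real.logb q x
      = (δ * Real.log ((q - 1) * x / δ) + (1 - δ) * Real.log (1 / (1 - δ))) / Real.log q := by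
        rw [Real.log_div (by positivity) hδ0.ne', Real.log_mul (by linarith) hx.ne',
          Real.log_div one_ne_zero h1δ.ne', Real.log_one]
        unfold entq Real.logb
        ring
    _ ≤ Real.log ((q - 1) * x + 1) / Real.log q :=
        div_le_div_of_nonneg_right h (Real.log_pos hq1).le
    _ = Real.logb q (1 + (q - 1) * x) := by rw [add_comm]; rfl

/-- The generalized GV bound never beats the asymptotic GV bound `1 − h_q(δ)`. -/
theorem generalized_GV_le_asymptotic_GV (q m : ℕ) (hq : 2 ≤ q) (hm : 1 ≤ m)
    (C : Finset (Fin m → Fin q)) (hC : C.Nonempty)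
    (δ : ℝ) (hδ : δ ∈ Set.Ioo (0 : ℝ) (1 - 1 / (q : ℝ)))
    (x : ℝ) (hx : x ∈ Set.Ioc (0 : ℝ) 1) :
    (1 / (m : ℝ)) * Real.logb q ((C.card : ℝ) / distEnum q m C x) + δ * Real.logb q x
      ≤ 1 - entq q δ := by
  obtain ⟨hδ0, hδ1⟩ := hδ
  have hδ1 : δ < 1 := hδ1.trans (sub_lt_self 1 (by positivity))
  have hcode := logb_card_div_distEnum_le hq hm hC hx.1 hx.2
  have hent := entq_add_mul_logb_le hq hδ0 hδ1 hx.1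
  linarith
end

section
/- Let q ≥ 2 and m ≥ 1 be integers and let C ⊆ Q^m be a nonempty code. Then there exist δ ∈ (0, 1 − 1/q) and x ∈ (0,1) with (1/m)·log_q( Σ_{c∈C} 1/B_c(x) ) + δ·log_q x > 1 − h_q(δ) if and only if there exists z ∈ (0,1) such that Σ_{c∈C} 1 / ( (1+(q−1)z)^m · B_c((1−z)/(1+(q−1)z)) ) > 1. -/
/-!
Write `k = q - 1` and `S(x) = Σ_{c ∈ C} 1 / B_c(x)`. For fixed `x`, the left-hand side is
maximised in `δ` at `δ* = kx / (1 + kx) ∈ (0, 1 - 1/q)`, where `h_q(δ) + δ log_q x` attains its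
maximum `log_q (1 + kx)` (Gibbs' inequality). So the first condition says
`1 - log_q (1 + kx) < log_q S(x) / m` for some `x ∈ (0, 1)`, i.e. `q^m < (1 + kx)^m S(x)`.
The substitution `z = (1 - x) / (1 + kx)` is an involution of `(0, 1)` with
`1 + kz = q / (1 + kx)`, and turns this into the second condition.
-/

open Finset

/-- The local distance enumerator `B_c(x) = Σ_j |{y ∈ C : d(c,y) = j}| x^j` of `c` in `C`. -/
noncomputable def localDistEnum (q m : ℕ) (C : Finset (Fin m → Fin q))
    (c : Fin m → Fin q) (x : ℝ) : ℝ :=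
  ∑ y ∈ C, x ^ hammingDist c y

namespace Real

variable {δ a : ℝ}

theorem binEntropy_add_mul_log_le (hδ₀ : 0 < δ) (hδ₁ : δ < 1) (ha : 0 < a) :
    binEntropy δ + δ * log a ≤ log (1 + a) := by
  -- The gap is the divergence of `(δ, 1 - δ)` from `(a, 1) / (1 + a)`;
  -- bound it termwise using `1 - y⁻¹ ≤ log y`.
  have h₁ := one_sub_inv_le_log_of_pos (show 0 < δ * (1 + a) / a by positivity)
  have h₂ := one_sub_inv_le_log_of_pos (show 0 < (1 - δ) * (1 + a) by nlinarith)
  rw [log_div (by positivity) ha.ne', log_mul hδ₀.ne' (by positivity)] at h₁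
  rw [log_mul (by linarith) (by positivity)] at h₂
  have hδ₁' : 1 - δ ≠ 0 := by linarith
  have hsum : δ * (1 - (δ * (1 + a) / a)⁻¹) + (1 - δ) * (1 - ((1 - δ) * (1 + a))⁻¹) = 0 := by
    field_simp
    ring
  rw [binEntropy, log_inv, log_inv]
  linarith [mul_le_mul_of_nonneg_left h₁ hδ₀.le, mul_le_mul_of_nonneg_left h₂ (sub_pos.2 hδ₁).le]

theorem binEntropy_div_one_add_add_mul_log (ha : 0 < a) :
    binEntropy (a / (1 + a)) + a / (1 + a) * log a = log (1 + a) := by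
  have h : 1 - a / (1 + a) = (1 + a)⁻¹ := by
    field_simp
    ring
  rw [binEntropy, h, inv_inv, inv_div, log_div (by positivity) ha.ne']
  field_simp
  ring

theorem one_lt_div_pow_iff_logb_lt {b P S : ℝ} {m : ℕ} (hb : 1 < b) (hP : 0 < P) (hS : 0 < S)
    (hm : 0 < m) : 1 < S / P ^ m ↔ logb b P < 1 / (m : ℝ) * logb b S := by
  rw [one_lt_div (pow_pos hP m), ← logb_lt_logb_iff hb (pow_pos hP m) hS, logb_pow,
    one_div_mul_eq_div, lt_div_iff₀ (by exact_mod_cast hm), mul_comm]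

end Real

theorem entq_add_mul_logb {q : ℕ} (hq : 2 ≤ q) {δ x : ℝ} (hx : 0 < x) :
    entq q δ + δ * Real.logb q x =
      (Real.binEntropy δ + δ * Real.log (((q : ℝ) - 1) * x)) / Real.log q := by
  have hq₁ : (q : ℝ) - 1 ≠ 0 := by
    have : (2 : ℝ) ≤ q := by exact_mod_cast hq
    linarith
  rw [Real.log_mul hq₁ hx.ne']
  simp only [entq, Real.logb, Real.binEntropy, Real.log_inv]
  ring

theorem isGreatest_entq_add_mul_logb {q : ℕ} (hq : 2 ≤ q) {x : ℝ} (hx : x ∈ Set.Ioo (0 : ℝ) 1) :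
    IsGreatest ((fun δ => entq q δ + δ * Real.logb q x) '' Set.Ioo 0 (1 - 1 / (q : ℝ)))
      (Real.logb q (1 + ((q : ℝ) - 1) * x)) := by
  obtain ⟨hx₀, hx₁⟩ := hx
  have hq' : (2 : ℝ) ≤ q := by exact_mod_cast hq
  set a := ((q : ℝ) - 1) * x
  have ha : 0 < a := mul_pos (by linarith) hx₀
  have hlt : 1 + a < q := by nlinarith
  refine ⟨⟨a / (1 + a), ⟨by positivity, ?_⟩, ?_⟩, ?_⟩
  · rw [show a / (1 + a) = 1 - 1 / (1 + a) by field_simp; ring]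
    gcongr
  · dsimp only
    rw [entq_add_mul_logb hq hx₀, Real.binEntropy_div_one_add_add_mul_log ha, Real.logb]
  · rintro _ ⟨δ, ⟨hδ₀, hδ₁⟩, rfl⟩
    dsimp only
    rw [entq_add_mul_logb hq hx₀, Real.logb]
    have hδ : δ < 1 := hδ₁.trans_le (by simp)
    exact div_le_div_of_nonneg_right (Real.binEntropy_add_mul_log_le hδ₀ hδ ha)
      (Real.log_nonneg (by linarith))

theorem exists_lt_entq_add_mul_logb_iff {q : ℕ} (hq : 2 ≤ q) {x : ℝ} (hx : x ∈ Set.Ioo (0 : ℝ) 1)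
    {t : ℝ} : (∃ δ ∈ Set.Ioo 0 (1 - 1 / (q : ℝ)), t < entq q δ + δ * Real.logb q x) ↔
      t < Real.logb q (1 + ((q : ℝ) - 1) * x) := by
  rw [lt_isLUB_iff (isGreatest_entq_add_mul_logb hq hx).isLUB, Set.exists_mem_image]

noncomputable def flipMobius (k x : ℝ) : ℝ := (1 - x) / (1 + k * x)

section flipMobius

variable {k x : ℝ}

theorem one_add_mul_pos_of_mem_Ioo (hk : -1 < k) (hx : x ∈ Set.Ioo (0 : ℝ) 1) :
    0 < 1 + k * x := by
  nlinarith [hx.1, hx.2]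

theorem flipMobius_mem_Ioo (hk : -1 < k) (hx : x ∈ Set.Ioo (0 : ℝ) 1) :
    flipMobius k x ∈ Set.Ioo (0 : ℝ) 1 := by
  have hden := one_add_mul_pos_of_mem_Ioo hk hx
  exact ⟨div_pos (by linarith [hx.2]) hden, (div_lt_one hden).2 (by nlinarith [hx.1])⟩

theorem one_add_mul_flipMobius (hx : 1 + k * x ≠ 0) :
    1 + k * flipMobius k x = (1 + k) / (1 + k * x) := by
  unfold flipMobius
  field_simp
  ring

theorem flipMobius_flipMobius (hk : 1 + k ≠ 0) (hx : 1 + k * x ≠ 0) :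
    flipMobius k (flipMobius k x) = x := by
  have h := one_add_mul_flipMobius hx
  have h' : 1 - flipMobius k x = x * (1 + k) / (1 + k * x) := by
    rw [flipMobius, eq_div_iff hx, sub_mul, div_mul_cancel₀ _ hx]
    ring
  rw [flipMobius, h, h', div_div_div_cancel_right₀ hx, mul_div_cancel_right₀ _ hk]

end flipMobius

theorem one_lt_sum_flipMobius_iff {q m : ℕ} (hq : 2 ≤ q) (hm : 1 ≤ m)
    {C : Finset (Fin m → Fin q)} (hC : C.Nonempty) {x : ℝ} (hx : x ∈ Set.Ioo (0 : ℝ) 1) :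
    1 < ∑ c ∈ C, 1 / ((1 + ((q : ℝ) - 1) * flipMobius ((q : ℝ) - 1) x) ^ m
        * localDistEnum q m C c (flipMobius ((q : ℝ) - 1) (flipMobius ((q : ℝ) - 1) x))) ↔
      1 - 1 / (m : ℝ) * Real.logb q (∑ c ∈ C, 1 / localDistEnum q m C c x) <
        Real.logb q (1 + ((q : ℝ) - 1) * x) := by
  have hq' : (1 : ℝ) < q := by exact_mod_cast hq
  have hden := one_add_mul_pos_of_mem_Ioo (k := (q : ℝ) - 1) (by linarith) hx
  have hS : 0 < ∑ c ∈ C, 1 / localDistEnum q m C c x :=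
    sum_pos (fun c _ => one_div_pos.2 (sum_pos (fun y _ => pow_pos hx.1 _) hC)) hC
  rw [flipMobius_flipMobius (by linarith) hden.ne', one_add_mul_flipMobius hden.ne',
    add_sub_cancel]
  simp_rw [div_mul_eq_div_div_swap]
  rw [← sum_div, Real.one_lt_div_pow_iff_logb_lt hq' (by positivity) hS hm,
    Real.logb_div (by positivity) hden.ne', Real.logb_self_eq_one hq', sub_lt_comm]

theorem improvement_condition_caro_wei (q m : ℕ) (hq : 2 ≤ q) (hm : 1 ≤ m)
    (C : Finset (Fin m → Fin q)) (hC : C.Nonempty) :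
    (∃ δ ∈ Set.Ioo (0 : ℝ) (1 - 1 / (q : ℝ)), ∃ x ∈ Set.Ioo (0 : ℝ) 1,
        1 - entq q δ <
          (1 / (m : ℝ)) * Real.logb q (∑ c ∈ C, 1 / localDistEnum q m C c x)
            + δ * Real.logb q x) ↔
      (∃ z ∈ Set.Ioo (0 : ℝ) 1,
        1 < ∑ c ∈ C, 1 / ((1 + ((q : ℝ) - 1) * z) ^ m
              * localDistEnum q m C c ((1 - z) / (1 + ((q : ℝ) - 1) * z)))) := by
  have hk : -1 < (q : ℝ) - 1 := by
    have : (2 : ℝ) ≤ q := by exact_mod_cast hq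
    linarith
  constructor
  · rintro ⟨δ, hδ, x, hx, h⟩
    refine ⟨flipMobius _ x, flipMobius_mem_Ioo hk hx, (one_lt_sum_flipMobius_iff hq hm hC hx).2 ?_⟩
    exact (exists_lt_entq_add_mul_logb_iff hq hx).1 ⟨δ, hδ, by linarith⟩
  · rintro ⟨z, hz, h⟩
    obtain ⟨x, hx, rfl⟩ : ∃ x ∈ Set.Ioo (0 : ℝ) 1, flipMobius ((q : ℝ) - 1) x = z :=
      ⟨_, flipMobius_mem_Ioo hk hz,
        flipMobius_flipMobius (by linarith) (one_add_mul_pos_of_mem_Ioo hk hz).ne'⟩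
    obtain ⟨δ, hδ, hδx⟩ :=
      (exists_lt_entq_add_mul_logb_iff hq hx).2 ((one_lt_sum_flipMobius_iff hq hm hC hx).1 h)
    exact ⟨δ, hδ, x, hx, by linarith⟩
end

section
/- Let q ≥ 2 and m ≥ 1 be integers and let C ⊆ Q^m be a nonempty code with distance distribution B_0, B_1, …, B_m. Define the polynomial A(z) = (1/|C|)·Σ_{j=0}^m B_j·(1−z)^j·(1+(q−1)z)^{m−j}, and write A(z) = Σ_{i=0}^m A_i z^i. Then A_0 = 1 and A_i ≥ 0 for all 0 ≤ i ≤ m (the Delsarte inequalities); consequently A(z) ≥ 1 for all z ≥ 0. -/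
open Finset Polynomial

/-- The distance distribution of a code: `distDistr q m C j = B_j =
(1/|C|)·|{(u,v) ∈ C×C : d(u,v) = j}|`. -/
noncomputable def distDistr (q m : ℕ) (C : Finset (Fin m → Fin q)) (j : ℕ) : ℝ :=
  (((C ×ˢ C).filter fun p => hammingDist p.1 p.2 = j).card : ℝ) / (C.card : ℝ)

/-- The polynomial `A(z) = (1/|C|)·Σ_{j=0}^m B_j·(1−z)^j·(1+(q−1)z)^{m−j}`. -/
noncomputable def delsartePoly (q m : ℕ) (C : Finset (Fin m → Fin q)) : Polynomial ℝ :=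
  Polynomial.C (C.card : ℝ)⁻¹ *
    ∑ j ∈ Finset.range (m + 1), Polynomial.C (distDistr q m C j) *
      (1 - Polynomial.X) ^ j * (1 + Polynomial.C ((q : ℝ) - 1) * Polynomial.X) ^ (m - j)

/-!
For a single pair of words, the MacWilliams kernel identity
`(1 - z)^d(u,v) (1 + (q-1) z)^(m - d(u,v)) = ∑_w z^wt(w) χ_w(u - v)`, with `w` running over the
characters of `(ℤ/q)^m` (the alphabet `Fin q` carries the group `ℤ/q`), follows coordinatewise from
orthogonality of characters. Summing over `u, v ∈ C` turns `|C|² A(z)` into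
`∑_w z^wt(w) |∑_{u ∈ C} χ_w(u)|²`, so every coefficient of `A` is nonnegative, while `A(0) = 1`
because only the pairs `u = v` survive. For `z ≥ 0` nonnegative coefficients give `A(z) ≥ A(0)`.
-/

theorem Polynomial.coeff_zero_le_eval_of_coeff_nonneg {R : Type*} [CommSemiring R]
    [PartialOrder R] [IsOrderedRing R] {p : R[X]} (hp : ∀ i, 0 ≤ p.coeff i) {z : R}
    (hz : 0 ≤ z) : p.coeff 0 ≤ p.eval z := by
  rw [eval_eq_sum_range]
  simpa using single_le_sum (fun i _ => mul_nonneg (hp i) (pow_nonneg hz i))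
    (mem_range.mpr p.natDegree.succ_pos)

theorem prod_ite_eq_pow_hammingDist {ι : Type*} [Fintype ι] {β : ι → Type*}
    [∀ i, DecidableEq (β i)] {R : Type*} [CommMonoid R] (x y : ∀ i, β i) (a b : R) :
    ∏ k, (if x k = y k then a else b) =
      a ^ (Fintype.card ι - hammingDist x y) * b ^ hammingDist x y := by
  have hcard := card_filter_add_card_filter_not (s := univ) (fun k => x k = y k)
  rw [prod_ite, prod_const, prod_const, card_univ] at *
  rw [hammingDist, ← hcard]
  simp

section MacWilliams

variable {G ι : Type*} [AddCommGroup G] [Fintype G] [DecidableEq G] [Fintype ι] [DecidableEq ι]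

theorem AddChar.sum_ite_eq_zero_mul_apply (z : ℂ) (c : G) :
    ∑ ψ : AddChar G ℂ, (if ψ = 0 then 1 else z) * ψ c =
      if c = 0 then 1 + ((Fintype.card G : ℂ) - 1) * z else 1 - z := by
  have hsplit (ψ : AddChar G ℂ) :
      (if ψ = 0 then 1 else z) * ψ c = z * ψ c + if ψ = 0 then 1 - z else 0 := by
    split_ifs with h <;> simp [h]
  simp_rw [hsplit, sum_add_distrib, ← mul_sum, sum_apply_eq_ite, sum_ite_eq', mem_univ, if_true]
  split_ifs <;> ring

theorem sum_pow_hammingNorm_mul_prod_apply_sub (z : ℂ) (u v : ι → G) :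
    ∑ w : ι → AddChar G ℂ, z ^ hammingNorm w * ∏ k, w k (u k - v k) =
      (1 - z) ^ hammingDist u v *
        (1 + ((Fintype.card G : ℂ) - 1) * z) ^ (Fintype.card ι - hammingDist u v) := by
  have hnorm (w : ι → AddChar G ℂ) : z ^ hammingNorm w = ∏ k, if w k = 0 then 1 else z := by
    simpa using (prod_ite_eq_pow_hammingDist w 0 (1 : ℂ) z).symm
  calc _ = ∏ k, ∑ ψ : AddChar G ℂ, (if ψ = 0 then 1 else z) * ψ (u k - v k) := by
        simp_rw [hnorm, ← prod_mul_distrib]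
        exact (Fintype.prod_sum fun k (ψ : AddChar G ℂ) =>
          (if ψ = 0 then 1 else z) * ψ (u k - v k)).symm
    _ = ∏ k, if u k = v k then 1 + ((Fintype.card G : ℂ) - 1) * z else 1 - z := by
        simp_rw [AddChar.sum_ite_eq_zero_mul_apply, sub_eq_zero]
    _ = _ := by rw [prod_ite_eq_pow_hammingDist, mul_comm]

/-- The Fourier coefficient of the indicator of `C` at the character `x ↦ ∏ k, w k (x k)`. -/
noncomputable def charSum (C : Finset (ι → G)) (w : ι → AddChar G ℂ) : ℂ :=
  ∑ u ∈ C, ∏ k, w k (u k)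

theorem sum_sum_hammingDist_eq_sum_normSq_charSum (C : Finset (ι → G)) (z : ℝ) :
    ∑ u ∈ C, ∑ v ∈ C, (1 - z) ^ hammingDist u v *
        (1 + ((Fintype.card G : ℝ) - 1) * z) ^ (Fintype.card ι - hammingDist u v) =
      ∑ w : ι → AddChar G ℂ, z ^ hammingNorm w * Complex.normSq (charSum C w) := by
  have hsub (w : ι → AddChar G ℂ) (u v : ι → G) :
      ∏ k, w k (u k - v k) = (∏ k, w k (u k)) * starRingEnd ℂ (∏ k, w k (v k)) := by
    simp_rw [sub_eq_add_neg, AddChar.map_add_eq_mul, AddChar.map_neg_eq_conj, prod_mul_distrib,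
      map_prod]
  apply Complex.ofReal_injective
  push_cast
  simp_rw [← sum_pow_hammingNorm_mul_prod_apply_sub, hsub, ← Complex.mul_conj, charSum, map_sum,
    sum_mul_sum, mul_sum]
  exact (sum_congr rfl fun u _ => sum_comm).trans sum_comm

end MacWilliams

section PairPoly

variable {α ι : Type*} [Fintype α] [DecidableEq α] [Fintype ι]

/-- `|C|² A(z)`, written as a sum over ordered pairs of codewords. -/
noncomputable def delsartePairPoly (C : Finset (ι → α)) : ℝ[X] :=
  ∑ u ∈ C, ∑ v ∈ C, (1 - X) ^ hammingDist u v *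
    (1 + Polynomial.C ((Fintype.card α : ℝ) - 1) * X) ^ (Fintype.card ι - hammingDist u v)

theorem delsartePairPoly_coeff_zero (C : Finset (ι → α)) :
    (delsartePairPoly C).coeff 0 = (C.card : ℝ) ^ 2 := by
  simp [coeff_zero_eq_eval_zero, delsartePairPoly, eval_finsetSum, sq]

theorem delsartePairPoly_eq_sum_normSq {G : Type*} [AddCommGroup G] [Fintype G] [DecidableEq G]
    [DecidableEq ι] (C : Finset (ι → G)) :
    delsartePairPoly C =
      ∑ w : ι → AddChar G ℂ, Polynomial.C (Complex.normSq (charSum C w)) * X ^ hammingNorm w := by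
  refine Polynomial.funext fun z => ?_
  simp only [delsartePairPoly, eval_finsetSum, eval_mul, eval_pow, eval_sub, eval_add, eval_one,
    eval_C, eval_X]
  rw [sum_sum_hammingDist_eq_sum_normSq_charSum]
  exact sum_congr rfl fun w _ => mul_comm _ _

theorem delsartePairPoly_coeff_nonneg {G : Type*} [AddCommGroup G] [Fintype G] [DecidableEq G]
    (C : Finset (ι → G)) (i : ℕ) : 0 ≤ (delsartePairPoly C).coeff i := by
  classical
  rw [delsartePairPoly_eq_sum_normSq, finsetSum_coeff]
  refine sum_nonneg fun w _ => ?_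
  rw [coeff_C_mul_X_pow]
  split_ifs
  exacts [Complex.normSq_nonneg _, le_rfl]

end PairPoly

theorem delsartePoly_eq_C_mul_delsartePairPoly (q m : ℕ) (C : Finset (Fin m → Fin q)) :
    delsartePoly q m C = Polynomial.C ((C.card : ℝ) ^ 2)⁻¹ * delsartePairPoly C := by
  have hfiber : delsartePairPoly C = ∑ j ∈ range (m + 1),
      ((C ×ˢ C).filter fun p => hammingDist p.1 p.2 = j).card •
        ((1 - X) ^ j * (1 + Polynomial.C ((q : ℝ) - 1) * X) ^ (m - j)) := by
    have hdist (p : (Fin m → Fin q) × (Fin m → Fin q)) (_ : p ∈ C ×ˢ C) :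
        hammingDist p.1 p.2 ∈ range (m + 1) :=
      mem_range_succ_iff.mpr (hammingDist_le_card_fintype.trans_eq (Fintype.card_fin m))
    simp only [delsartePairPoly, Fintype.card_fin]
    rw [← sum_product', ← sum_fiberwise_of_maps_to' hdist
      fun j => (1 - X) ^ j * (1 + Polynomial.C ((q : ℝ) - 1) * X) ^ (m - j)]
    simp only [sum_const]
  rw [hfiber, delsartePoly, mul_sum, mul_sum]
  refine sum_congr rfl fun j _ => ?_
  simp only [distDistr, nsmul_eq_mul, ← C_eq_natCast, div_eq_mul_inv, ← inv_pow, map_mul, map_pow]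
  ring

theorem delsarte_inequalities_general (q m : ℕ) (hq : 2 ≤ q)
    (C : Finset (Fin m → Fin q)) (hC : C.Nonempty) :
    (delsartePoly q m C).coeff 0 = 1 ∧
      (∀ i ≤ m, 0 ≤ (delsartePoly q m C).coeff i) ∧
      (∀ z : ℝ, 0 ≤ z → 1 ≤ (delsartePoly q m C).eval z) := by
  have : NeZero q := ⟨by omega⟩
  have hcard : (C.card : ℝ) ≠ 0 := Nat.cast_ne_zero.mpr hC.card_pos.ne'
  have hcoeff_zero : (delsartePoly q m C).coeff 0 = 1 := by
    rw [delsartePoly_eq_C_mul_delsartePairPoly, coeff_C_mul, delsartePairPoly_coeff_zero,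
      inv_mul_cancel₀ (pow_ne_zero 2 hcard)]
  have hcoeff_nonneg (i : ℕ) : 0 ≤ (delsartePoly q m C).coeff i := by
    rw [delsartePoly_eq_C_mul_delsartePairPoly, coeff_C_mul]
    exact mul_nonneg (by positivity) (delsartePairPoly_coeff_nonneg C i)
  exact ⟨hcoeff_zero, fun i _ => hcoeff_nonneg i,
    fun z hz => hcoeff_zero ▸ coeff_zero_le_eval_of_coeff_nonneg hcoeff_nonneg hz⟩

/-- The Delsarte inequalities: writing `A(z) = Σ_i A_i z^i`, one has `A_0 = 1` and
`A_i ≥ 0` for all `0 ≤ i ≤ m`; consequently `A(z) ≥ 1` for all `z ≥ 0`. -/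
theorem delsarte_inequalities (q m : ℕ) (hq : 2 ≤ q) (hm : 1 ≤ m)
    (C : Finset (Fin m → Fin q)) (hC : C.Nonempty) :
    (delsartePoly q m C).coeff 0 = 1 ∧
      (∀ i ≤ m, 0 ≤ (delsartePoly q m C).coeff i) ∧
      (∀ z : ℝ, 0 ≤ z → 1 ≤ (delsartePoly q m C).eval z) :=
  delsarte_inequalities_general q m hq C hC
end
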